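/- Let p be a prime with p ≥ 7. The 5×5 lower triangular Toeplitz matrix over F_p with first column (1, 1, 3/4, 3/8, 1/4) is LT-superregular. -/

import Mathlib

/-!
Multiplying by 8 turns the matrix into the integer lower triangular Toeplitz matrix with
first column (8, 8, 6, 3, 2). A finite computation shows that every LT-minor of that integer
matrix divides 2¹⁵·3·5 (in fact their lcm), so none of them vanishes modulo a prime p ≥ 7,
and rescaling by the unit 8⁻¹ of 𝔽_p preserves LT-superregularity.
-/

/-- A matrix is LT-superregular if every square submatrix (given by strictly
increasing row and column indices) whose diagonal entries all lie in the lower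
triangular part (row index ≥ column index) has nonzero determinant. -/
def LTSuperregular {n : ℕ} {R : Type*} [CommRing R] (A : Matrix (Fin n) (Fin n) R) : Prop :=
  ∀ (k : ℕ) (r c : Fin k → Fin n), StrictMono r → StrictMono c →
    (∀ i, (c i : ℕ) ≤ (r i : ℕ)) → (A.submatrix r c).det ≠ 0

/-- The n×n lower triangular Toeplitz matrix whose first column is a 0, a 1, ... ;
its (i,j) entry is `a (i - j)` when i ≥ j and 0 otherwise. -/
def ltToeplitz (n : ℕ) {R : Type*} [CommRing R] (a : ℕ → R) : Matrix (Fin n) (Fin n) R :=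
  Matrix.of fun i j => if (j : ℕ) ≤ (i : ℕ) then a ((i : ℕ) - (j : ℕ)) else 0

theorem List.ofFn_sublist_finRange {n k : ℕ} {r : Fin k → Fin n} (hr : StrictMono r) :
    (List.ofFn r).Sublist (List.finRange n) :=
  List.sublist_of_subperm_of_sortedLE
    (List.subperm_of_subset (List.nodup_ofFn.2 hr.injective) fun x _ => List.mem_finRange x)
    (List.sortedLT_ofFn_iff.2 hr).sortedLE (List.sortedLT_finRange n).sortedLE

theorem List.getD_ofFn {α : Type*} {k : ℕ} (f : Fin k → α) (d : α) (i : Fin k) :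
    (List.ofFn f).getD i d = f i := by
  simp

/-- A strictly increasing `r` is the sublist `List.ofFn r` of `finRange n`, so the hypothesis `h`
is a finite check that `decide` can carry out. -/
theorem forall_ltMinors_of_forall_sublists {n : ℕ} [NeZero n] {R : Type*} [CommRing R]
    (A : Matrix (Fin n) (Fin n) R) (P : R → Prop)
    (h : ∀ k ≤ n, ∀ l ∈ (List.finRange n).sublists, ∀ l' ∈ (List.finRange n).sublists,
      l.length = k → l'.length = k → (∀ i : Fin k, (l'.getD i 0 : ℕ) ≤ l.getD i 0) →
      P (A.submatrix (fun i : Fin k => l.getD i 0) (fun i : Fin k => l'.getD i 0)).det)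
    (k : ℕ) (r c : Fin k → Fin n) (hr : StrictMono r) (hc : StrictMono c)
    (hrc : ∀ i, (c i : ℕ) ≤ r i) : P (A.submatrix r c).det := by
  have hk : k ≤ n := by simpa using Fintype.card_le_of_injective r hr.injective
  have := h k hk (List.ofFn r) (List.mem_sublists.2 (List.ofFn_sublist_finRange hr))
    (List.ofFn c) (List.mem_sublists.2 (List.ofFn_sublist_finRange hc)) (by simp) (by simp)
  simp only [List.getD_ofFn] at this
  exact this hrc

theorem ltToeplitz_map {n : ℕ} {R S : Type*} [CommRing R] [CommRing S] (f : R →+* S)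
    (a : ℕ → R) : (ltToeplitz n a).map f = ltToeplitz n (f ∘ a) := by
  ext i j
  simp only [ltToeplitz, Matrix.map_apply, Matrix.of_apply, Function.comp_apply]
  split_ifs <;> simp

theorem ltToeplitz_smul {n : ℕ} {R : Type*} [CommRing R] (c : R) (a : ℕ → R) :
    ltToeplitz n (c • a) = c • ltToeplitz n a := by
  ext i j
  simp only [ltToeplitz, Matrix.smul_apply, Matrix.of_apply, Pi.smul_apply]
  split_ifs <;> simp

theorem ltSuperregular_map_iff {n : ℕ} {R S : Type*} [CommRing R] [CommRing S] (f : R →+* S)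
    (A : Matrix (Fin n) (Fin n) R) :
    LTSuperregular (A.map f) ↔ ∀ (k : ℕ) (r c : Fin k → Fin n), StrictMono r → StrictMono c →
      (∀ i, (c i : ℕ) ≤ (r i : ℕ)) → f (A.submatrix r c).det ≠ 0 := by
  simp only [LTSuperregular, Matrix.submatrix_map, RingHom.map_det, RingHom.mapMatrix_apply]

theorem LTSuperregular.smul {n : ℕ} {R : Type*} [CommRing R] {A : Matrix (Fin n) (Fin n) R}
    (hA : LTSuperregular A) {c : R} (hc : IsUnit c) : LTSuperregular (c • A) := by
  intro k r c' hr hc' hrc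
  change (c • A.submatrix r c').det ≠ 0
  rw [Matrix.det_smul, Ne, (hc.pow _).mul_right_eq_zero]
  exact hA k r c' hr hc' hrc

theorem Nat.Prime.not_dvd_two_pow_mul_three_pow_mul_five_pow {p : ℕ} (hp : p.Prime) (h7 : 7 ≤ p)
    (a b c : ℕ) : ¬ p ∣ 2 ^ a * 3 ^ b * 5 ^ c := by
  have not_dvd_pow : ∀ q m, 0 < q → q < 7 → ¬ p ∣ q ^ m := fun q m hq hq7 h => by
    have := Nat.le_of_dvd hq (hp.dvd_of_dvd_pow h)
    omega
  simp only [hp.dvd_mul, not_or]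
  exact ⟨⟨not_dvd_pow 2 a (by norm_num) (by norm_num),
    not_dvd_pow 3 b (by norm_num) (by norm_num)⟩, not_dvd_pow 5 c (by norm_num) (by norm_num)⟩

def integralColumn : ℕ → ℤ := fun k => [8, 8, 6, 3, 2].getD k 0

set_option maxRecDepth 10000 in
theorem ltToeplitz_integralColumn_ltMinor_dvd (k : ℕ) (r c : Fin k → Fin 5) (hr : StrictMono r)
    (hc : StrictMono c) (hrc : ∀ i, (c i : ℕ) ≤ r i) :
    ((ltToeplitz 5 integralColumn).submatrix r c).det ∣ 2 ^ 15 * 3 * 5 :=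
  forall_ltMinors_of_forall_sublists _ (· ∣ 2 ^ 15 * 3 * 5) (by decide) k r c hr hc hrc

theorem column_eq_inv_eight_smul_integralColumn {K : Type*} [Field K] (h2 : (2 : K) ≠ 0) :
    (fun k => [1, 1, 3 * 4⁻¹, 3 * 8⁻¹, 4⁻¹].getD k (0 : K)) =
      (8⁻¹ : K) • (Int.castRingHom K ∘ integralColumn) := by
  have h8 : (8 : K) = 2 ^ 3 := by norm_num
  have h4 : (4 : K) = 2 ^ 2 := by norm_num
  funext k
  rcases k with _ | _ | _ | _ | _ | k <;> simp [integralColumn, h8, h4]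
  all_goals field_simp
  norm_num

theorem stmt_11 (p : ℕ) (hp : p.Prime) (h7 : 7 ≤ p) :
    LTSuperregular (ltToeplitz 5 (fun k => [1, 1, 3 * 4⁻¹, 3 * 8⁻¹, 4⁻¹].getD k (0 : ZMod p))) := by
  have : Fact p.Prime := ⟨hp⟩
  have h2 : (2 : ZMod p) ≠ 0 := by
    rw [← Nat.cast_ofNat, Ne, ZMod.natCast_eq_zero_iff]
    simpa using hp.not_dvd_two_pow_mul_three_pow_mul_five_pow h7 1 0 0
  have h8 : (8 : ZMod p) ≠ 0 := by
    rw [show (8 : ZMod p) = 2 ^ 3 by norm_num]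
    exact pow_ne_zero 3 h2
  rw [column_eq_inv_eight_smul_integralColumn h2, ltToeplitz_smul, ← ltToeplitz_map]
  refine LTSuperregular.smul ?_ (isUnit_iff_ne_zero.2 (inv_ne_zero h8))
  refine (ltSuperregular_map_iff _ _).2 fun k r c hr hc hrc hp_dvd => ?_
  rw [eq_intCast, ZMod.intCast_zmod_eq_zero_iff_dvd] at hp_dvd
  have hp_dvd_bound := hp_dvd.trans (ltToeplitz_integralColumn_ltMinor_dvd k r c hr hc hrc)
  exact hp.not_dvd_two_pow_mul_three_pow_mul_five_pow h7 15 1 1 (by exact_mod_cast hp_dvd_bound)
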